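/- Let p be an odd prime, let s be an integer with 0 < s < p−1, and let a be an integer with 0 < a < p. Then b_{1,s}(a) = 0 in F_p if and only if p does not divide the binomial coefficient C(a + s·a, a). -/

import Mathlib

noncomputable def binomF {K : Type*} [Field K] (f : K) (m : ℕ) : K :=
  Polynomial.eval f (descPochhammer K m) / (m.factorial : K)

noncomputable def bPoly (p : ℕ) [Fact p.Prime] (r s : ℕ) : Polynomial (ZMod p) :=
  ∑ k ∈ Finset.range p,
    Polynomial.C ((-(r : ZMod p) / (s : ZMod p)) ^ k /
        (((p - 1 - k).factorial : ZMod p) * (k.factorial : ZMod p))) *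
      Polynomial.eval (Polynomial.C (r : ZMod p) * Polynomial.X - 1)
        (descPochhammer (Polynomial (ZMod p)) (p - 1 - k)) *
      Polynomial.eval (Polynomial.C (s : ZMod p) * Polynomial.X - 1)
        (descPochhammer (Polynomial (ZMod p)) k)

/-!
Write `c = -1/s` and let `t < p - 1` be the residue of `s a - 1`. After evaluating the binomial
polynomials at `a`, `b_{1,s}(a)` is the coefficient of `X^(p-1)` in
`F = (1 + c X)^t (1 + X)^(a-1)`. Since `deg F < 2(p - 1)`, that coefficient equals
`-∑_{x ∈ F_p} F(x)`, which is invariant under the substitution `X ↦ X - 1`; this turns `F` into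
`((1 - c) + c X)^t X^(a-1)`, whose coefficient of `X^(p-1)` is
`C(t, p-a) c^(p-a) (1-c)^(t-p+a)`.
So `b_{1,s}(a) ≠ 0` exactly when `p - a ≤ t`, and by Lucas' theorem this is the carry condition
`(a + s a) mod p < a` for `p ∣ C(a + s a, a)`; the two conditions could only disagree when
`p ∣ a (s + 1)`, which `s < p - 1` rules out.
-/

open Finset Polynomial

theorem Polynomial.coeff_C_mul_X_add_C_pow {R : Type*} [CommSemiring R] (c d : R) (n k : ℕ) :
    ((C c * X + C d) ^ n).coeff k = c ^ k * d ^ (n - k) * n.choose k := by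
  rw [show C c * X + C d = (X + C d).comp (C c * X) by simp, ← pow_comp, comp_C_mul_X_coeff,
    coeff_X_add_C_pow]
  ring

theorem Polynomial.coeff_C_mul_X_add_one_pow_mul_X_add_one_pow {R : Type*} [CommSemiring R]
    (c : R) (m n N : ℕ) :
    ((C c * X + 1) ^ n * (X + 1) ^ m).coeff N
      = ∑ k ∈ range (N + 1), c ^ k * n.choose k * m.choose (N - k) := by
  rw [coeff_mul, Finset.Nat.sum_antidiagonal_eq_sum_range_succ_mk]
  refine sum_congr rfl fun k _ => ?_
  rw [← C_1, coeff_C_mul_X_add_C_pow, coeff_X_add_C_pow]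
  ring

theorem descPochhammer_eval_eval {R : Type*} [CommRing R] (n : ℕ) (f : R[X]) (x : R) :
    ((descPochhammer R[X] n).eval f).eval x = (descPochhammer R n).eval (f.eval x) := by
  simp [descPochhammer_eval_eq_prod_range, eval_prod]

namespace FiniteField

variable {K : Type*} [Field K] [Fintype K]

local notation "q" => Fintype.card K

theorem sum_pow_of_lt_two_mul {i : ℕ} (hi : i < 2 * (q - 1)) :
    ∑ x : K, x ^ i = if i = q - 1 then -1 else 0 := by
  rcases lt_or_ge i (q - 1) with h | h
  · rw [sum_pow_lt_card_sub_one K i h, if_neg h.ne]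
  have hq : 1 < q := Fintype.one_lt_card
  have hi0 : i ≠ 0 := by omega
  classical
  have hunits : ∑ x : K, x ^ i = ∑ x : Kˣ, (x : K) ^ i :=
    calc ∑ x : K, x ^ i = ∑ x ∈ univ.map ⟨((↑) : Kˣ → K), Units.val_injective⟩, x ^ i :=
          (sum_subset (subset_univ _) fun x _ hx => by
            obtain rfl : x = 0 := by
              by_contra hx0
              exact hx (mem_map.2 ⟨Units.mk0 x hx0, mem_univ _, rfl⟩)
            exact zero_pow hi0).symm
      _ = ∑ x : Kˣ, (x : K) ^ i := sum_map _ _ _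
  rw [hunits, sum_pow_units]
  exact if_congr ⟨fun hd => Nat.eq_of_dvd_of_lt_two_mul hi0 hd hi, fun he => he ▸ dvd_rfl⟩
    rfl rfl

theorem _root_.Polynomial.sum_eval_eq_neg_coeff_card_sub_one {f : K[X]}
    (hf : f.natDegree < 2 * (q - 1)) : ∑ x : K, f.eval x = -f.coeff (q - 1) := by
  have hq : 1 < q := Fintype.one_lt_card
  simp_rw [eval_eq_sum_range' hf]
  rw [sum_comm]
  simp_rw [← mul_sum]
  rw [sum_congr rfl fun i hi => by rw [sum_pow_of_lt_two_mul (mem_range.1 hi)]]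
  simp_rw [mul_ite, mul_neg_one, mul_zero]
  rw [sum_ite_eq' (range _) (q - 1), if_pos (mem_range.2 (by omega))]

theorem _root_.Polynomial.coeff_card_sub_one_comp_X_add_C {f : K[X]}
    (hf : f.natDegree < 2 * (q - 1)) (b : K) :
    (f.comp (X + C b)).coeff (q - 1) = f.coeff (q - 1) := by
  have hcomp : (f.comp (X + C b)).natDegree = f.natDegree := by
    rw [natDegree_comp, natDegree_X_add_C, mul_one]
  rw [← neg_inj, ← sum_eval_eq_neg_coeff_card_sub_one hf,
    ← sum_eval_eq_neg_coeff_card_sub_one (hcomp ▸ hf)]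
  simp only [eval_comp, eval_add, eval_X, eval_C]
  exact Fintype.sum_equiv (Equiv.addRight b) _ _ fun _ => rfl

theorem coeff_card_sub_one_C_mul_X_add_one_pow_mul_X_add_one_pow (c : K) {m n : ℕ}
    (hmn : m + n < 2 * (q - 1)) (hm : m < q) :
    ((C c * X + 1) ^ n * (X + 1) ^ m).coeff (q - 1)
      = c ^ (q - 1 - m) * (1 - c) ^ (n - (q - 1 - m)) * n.choose (q - 1 - m) := by
  set g : K[X] := (C c * X + C (1 - c)) ^ n * X ^ m
  have hg : g.natDegree < 2 * (q - 1) :=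
    (natDegree_mul_le.trans (add_le_add (natDegree_pow_le_of_le n natDegree_linear_le)
      (natDegree_X_pow_le m))).trans_lt (by omega)
  have hshift : (C c * X + 1) ^ n * (X + 1) ^ m = g.comp (X + C 1) := by
    simp only [g, mul_comp, pow_comp, add_comp, C_comp, X_comp, C_1, C_sub, sub_comp, one_comp]
    ring
  rw [hshift, coeff_card_sub_one_comp_X_add_C hg, coeff_mul_X_pow', if_pos (by omega),
    coeff_C_mul_X_add_C_pow]

end FiniteField

theorem Nat.Prime.dvd_choose_iff_mod_lt {p n k : ℕ} (hp : p.Prime) (hk : k < p) :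
    p ∣ n.choose k ↔ n % p < k := by
  have := Fact.mk hp
  have lucas := Choose.choose_modEq_choose_mod_mul_choose_div_nat (p := p) (n := n) (k := k)
  rw [Nat.mod_eq_of_lt hk, Nat.div_eq_of_lt hk, Nat.choose_zero_right, mul_one] at lucas
  rw [← ZMod.natCast_eq_zero_iff, (ZMod.natCast_eq_natCast_iff _ _ _).2 lucas,
    ZMod.natCast_eq_zero_iff]
  refine ⟨fun hdvd => not_le.1 fun hkn => ?_, fun hlt => by simp [Nat.choose_eq_zero_of_lt hlt]⟩
  have hfac : p ∣ (n % p).factorial := hdvd.trans <|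
    Dvd.intro _ (by rw [← mul_assoc]; exact Nat.choose_mul_factorial_mul_factorial hkn)
  exact absurd ((hp.dvd_factorial).1 hfac) (not_le.2 (Nat.mod_lt _ hp.pos))

theorem Nat.mod_sub_one_lt_sub_iff {p a m : ℕ} (hap : a < p) (hm : ¬ p ∣ m)
    (ham : ¬ p ∣ a + m) : m % p - 1 < p - a ↔ a ≤ (a + m) % p := by
  have hr : 0 < m % p := Nat.pos_of_ne_zero (mt Nat.dvd_of_mod_eq_zero hm)
  have hrp : m % p < p := Nat.mod_lt m (by omega)
  have hmod : (a + m) % p = (a + m % p) % p := by rw [Nat.add_mod, Nat.mod_eq_of_lt hap]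
  have hne : a + m % p ≠ p := fun he =>
    ham (Nat.dvd_of_mod_eq_zero (by rw [hmod, he, Nat.mod_self]))
  rw [hmod]
  rcases lt_or_ge (a + m % p) p with h | h
  · rw [Nat.mod_eq_of_lt h]
    omega
  · have hsub : (a + m % p) % p = a + m % p - p := by
      rw [Nat.mod_eq_sub_mod h, Nat.mod_eq_of_lt (by omega)]
    rw [hsub]
    omega

theorem binomF_natCast {K : Type*} [Field K] (n : ℕ) {m : ℕ} (hm : (m.factorial : K) ≠ 0) :
    binomF (n : K) m = n.choose m := by
  rw [binomF, descPochhammer_eval_eq_descFactorial, Nat.descFactorial_eq_factorial_mul_choose,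
    Nat.cast_mul, mul_div_cancel_left₀ _ hm]

theorem bPoly_eval (p : ℕ) [Fact p.Prime] (r s : ℕ) (x : ZMod p) :
    (bPoly p r s).eval x = ∑ k ∈ range p,
      (-(r : ZMod p) / s) ^ k * binomF (r * x - 1) (p - 1 - k) * binomF (s * x - 1) k := by
  simp only [bPoly, eval_finsetSum, eval_mul, eval_C, descPochhammer_eval_eval, eval_sub,
    eval_X, eval_one, binomF]
  refine sum_congr rfl fun k _ => ?_
  ring

section bPoly

variable {p : ℕ} [Fact p.Prime] {s a t : ℕ}

theorem bPoly_one_eval_natCast (ha0 : 0 < a) (hap : a ≤ p) (ht : (t : ZMod p) = s * a - 1)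
    (htp : t < p - 1) :
    (bPoly p 1 s).eval (a : ZMod p) =
      (-(s : ZMod p)⁻¹) ^ (p - a) * (1 + (s : ZMod p)⁻¹) ^ (t - (p - a)) * t.choose (p - a) := by
  have hp : p.Prime := Fact.out
  have hfac {k : ℕ} (hk : k < p) : (k.factorial : ZMod p) ≠ 0 := by
    rw [Ne, ZMod.natCast_eq_zero_iff, hp.dvd_factorial]
    omega
  have hcoeff := FiniteField.coeff_card_sub_one_C_mul_X_add_one_pow_mul_X_add_one_pow
    (K := ZMod p) (-(s : ZMod p)⁻¹) (m := a - 1) (n := t)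
  rw [ZMod.card, show p - 1 - (a - 1) = p - a by omega, sub_neg_eq_add] at hcoeff
  rw [← hcoeff (by omega) (by omega), coeff_C_mul_X_add_one_pow_mul_X_add_one_pow,
    Nat.sub_add_cancel hp.one_le, bPoly_eval]
  refine sum_congr rfl fun k hk => ?_
  have hk : k < p := mem_range.1 hk
  rw [Nat.cast_one, one_mul, ← ht, ← Nat.cast_pred ha0, binomF_natCast _ (hfac (by omega)),
    binomF_natCast _ (hfac hk)]
  ring

theorem bPoly_one_eval_natCast_eq_zero_iff (hs : ¬ p ∣ s) (hs1 : ¬ p ∣ s + 1) (ha0 : 0 < a)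
    (hap : a ≤ p) (ht : (t : ZMod p) = s * a - 1) (htp : t < p - 1) :
    (bPoly p 1 s).eval (a : ZMod p) = 0 ↔ t < p - a := by
  have hp : p.Prime := Fact.out
  have hs' : (s : ZMod p) ≠ 0 := by rwa [Ne, ZMod.natCast_eq_zero_iff]
  have hs1' : 1 + (s : ZMod p)⁻¹ ≠ 0 := by
    rw [← one_div, one_add_div hs']
    exact div_ne_zero (by exact_mod_cast (ZMod.natCast_eq_zero_iff _ _).not.2 hs1) hs'
  have hchoose : (t.choose (p - a) : ZMod p) = 0 ↔ t < p - a := by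
    rw [ZMod.natCast_eq_zero_iff, hp.dvd_choose_iff_mod_lt (by omega), Nat.mod_eq_of_lt (by omega)]
  simp [bPoly_one_eval_natCast ha0 hap ht htp, hs', hs1', hchoose]

end bPoly

theorem stmt13_general (p s a : ℕ) [Fact p.Prime]
    (hs0 : 0 < s) (hsp : s < p - 1) (ha0 : 0 < a) (hap : a < p) :
    (bPoly p 1 s).eval (a : ZMod p) = 0 ↔ ¬ (p ∣ (a + s * a).choose a) := by
  have hp : p.Prime := Fact.out
  have hpa : ¬ p ∣ a := Nat.not_dvd_of_pos_of_lt ha0 hap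
  have hps : ¬ p ∣ s := Nat.not_dvd_of_pos_of_lt hs0 (by omega)
  have hps1 : ¬ p ∣ s + 1 := Nat.not_dvd_of_pos_of_lt (by omega) (by omega)
  have hpsa : ¬ p ∣ s * a := by simp [hp.dvd_mul, hps, hpa]
  have hpasa : ¬ p ∣ a + s * a := by
    rw [show a + s * a = a * (s + 1) by ring]
    simp [hp.dvd_mul, hpa, hps1]
  have ht : ((s * a % p - 1 : ℕ) : ZMod p) = s * a - 1 := by
    rw [Nat.cast_sub (Nat.pos_of_ne_zero (mt Nat.dvd_of_mod_eq_zero hpsa)), ZMod.natCast_mod]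
    push_cast
    rfl
  have htp : s * a % p - 1 < p - 1 := by have := Nat.mod_lt (s * a) hp.pos; omega
  rw [bPoly_one_eval_natCast_eq_zero_iff hps hps1 ha0 hap.le ht htp,
    hp.dvd_choose_iff_mod_lt hap, not_lt, Nat.mod_sub_one_lt_sub_iff hap hpsa hpasa]

theorem stmt13 (p s a : ℕ) [Fact p.Prime] (hodd : Odd p)
    (hs0 : 0 < s) (hsp : s < p - 1) (ha0 : 0 < a) (hap : a < p) :
    (bPoly p 1 s).eval (a : ZMod p) = 0 ↔ ¬ (p ∣ (a + s * a).choose a) :=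
  stmt13_general p s a hs0 hsp ha0 hap
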